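/- Let κ be an uncountable regular cardinal with κ^{<κ} = κ. No κ-Sacks tree T satisfies [T] ⊆ C or [T] ∩ C = ∅, where C is the club filter on 2^κ; in fact, every κ-Sacks tree has both a branch whose 1-set contains a club and a branch whose 0-set contains a club. -/

import Mathlib

open Cardinal Set

structure PreSeq2 where
  len : Ordinal
  val : Ordinal → Bool

def PreSeq2.Canonical (s : PreSeq2) : Prop := ∀ i, s.len ≤ i → s.val i = false

def PreSeq2.Ext (s t : PreSeq2) : Prop := s.len ≤ t.len ∧ ∀ i < s.len, s.val i = t.val i

noncomputable def restrictFn2 (x : Ordinal → Bool) (a : Ordinal) : PreSeq2 :=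
  ⟨a, fun i => if i < a then x i else false⟩

noncomputable def PreSeq2.snoc (s : PreSeq2) (b : Bool) : PreSeq2 :=
  ⟨s.len + 1, fun i => if i < s.len then s.val i else if i = s.len then b else false⟩

def IsClubIn (c : Set Ordinal) (k : Ordinal) : Prop :=
  c ⊆ Set.Iio k ∧
  (∀ l, l < k → Order.IsSuccLimit l → (∀ a < l, ∃ b ∈ c, a ≤ b ∧ b < l) → l ∈ c) ∧
  (∀ a < k, ∃ b ∈ c, a ≤ b)

def Splitting (T : Set PreSeq2) (t : PreSeq2) : Prop :=
  PreSeq2.snoc t false ∈ T ∧ PreSeq2.snoc t true ∈ T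

def IsSacks (κ : Cardinal) (T : Set PreSeq2) : Prop :=
  T.Nonempty ∧
  (∀ s ∈ T, s.len < κ.ord ∧ s.Canonical) ∧
  (∀ s ∈ T, ∀ a ≤ s.len, restrictFn2 s.val a ∈ T) ∧
  (∀ s ∈ T, ∃ t ∈ T, PreSeq2.Ext s t ∧ s.len < t.len) ∧
  (∀ x : Ordinal → Bool, ∀ l, l < κ.ord → Order.IsSuccLimit l →
    (∀ a < l, restrictFn2 x a ∈ T) → restrictFn2 x l ∈ T) ∧
  (∀ s ∈ T, ∃ t ∈ T, PreSeq2.Ext s t ∧ Splitting T t) ∧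
  (∀ x : Ordinal → Bool, ∀ l, l < κ.ord → Order.IsSuccLimit l →
    (∀ a < l, ∃ b, a ≤ b ∧ b < l ∧ Splitting T (restrictFn2 x b)) →
    Splitting T (restrictFn2 x l))

def Branches2 (κ : Cardinal) (T : Set PreSeq2) : Set (Ordinal → Bool) :=
  { x | ∀ a < κ.ord, restrictFn2 x a ∈ T }

/-- The club filter on `2^κ`. -/
def clubFilterSet (κ : Cardinal) : Set (Ordinal → Bool) :=
  { x | ∃ c, IsClubIn c κ.ord ∧ ∀ i ∈ c, x i = true }

/-! A greedy branch that turns towards `b` whenever the tree lets it meets a splitting node of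
the tree above every level, because it can only leave a splitting extension of its current node
at a splitting node; closure of the tree under limits of splitting nodes makes those levels a
club, on which the branch takes the value `b`. Taking `b = false` gives a branch outside the club
filter, and `b = true` one inside it, since two clubs in `κ` meet when `cf κ > ω`. -/

open scoped Classical

@[ext]
theorem PreSeq2.ext {s t : PreSeq2} (hlen : s.len = t.len) (hval : s.val = t.val) : s = t := by
  cases s; cases t
  cases hlen; cases hval
  rfl

@[simp]
theorem restrictFn2_val_of_lt (x : Ordinal → Bool) {a i : Ordinal} (hi : i < a) :
    (restrictFn2 x a).val i = x i :=
  if_pos hi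

theorem restrictFn2_congr {x y : Ordinal → Bool} {a : Ordinal} (h : ∀ i < a, x i = y i) :
    restrictFn2 x a = restrictFn2 y a := by
  ext : 1
  · rfl
  · funext i
    simp only [restrictFn2]
    split_ifs with hi
    exacts [h i hi, rfl]

theorem restrictFn2_add_one (x : Ordinal → Bool) (a : Ordinal) :
    restrictFn2 x (a + 1) = (restrictFn2 x a).snoc (x a) := by
  ext : 1
  · rfl
  · funext i
    simp only [restrictFn2, PreSeq2.snoc, Order.lt_add_one_iff]
    rcases lt_trichotomy i a with hi | rfl | hi
    · simp [hi, hi.le]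
    · simp
    · simp [hi.not_ge, hi.not_gt, hi.ne']

theorem PreSeq2.Canonical.restrictFn2_len {s : PreSeq2} (hs : s.Canonical) :
    restrictFn2 s.val s.len = s := by
  ext : 1
  · rfl
  · funext i
    simp only [restrictFn2]
    split_ifs with hi
    exacts [rfl, (hs i (not_lt.1 hi)).symm]

section Sacks

variable {κ : Cardinal} {T : Set PreSeq2}

theorem IsSacks.exists_snoc_mem (hT : IsSacks κ T) {s : PreSeq2} (hs : s ∈ T) :
    ∃ v, s.snoc v ∈ T := by
  obtain ⟨-, hcan, hres, hlong, -⟩ := hT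
  obtain ⟨t, ht, ⟨-, hst⟩, hlt⟩ := hlong s hs
  refine ⟨t.val s.len, ?_⟩
  have hmem := hres t ht (s.len + 1) (Order.add_one_le_of_lt hlt)
  rwa [restrictFn2_add_one, ← restrictFn2_congr hst, (hcan s hs).2.restrictFn2_len] at hmem

noncomputable def greedyBranch (T : Set PreSeq2) (b : Bool) : Ordinal → Bool :=
  Ordinal.lt_wf.fix fun i ih =>
    if PreSeq2.snoc ⟨i, fun j => if h : j < i then ih j h else false⟩ b ∈ T then b else !b

theorem greedyBranch_apply (T : Set PreSeq2) (b : Bool) (i : Ordinal) :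
    greedyBranch T b i =
      if (restrictFn2 (greedyBranch T b) i).snoc b ∈ T then b else !b := by
  rw [greedyBranch, WellFounded.fix_eq]
  rfl

section Step

variable {b : Bool} {i : Ordinal}

theorem greedyBranch_of_splitting (h : Splitting T (restrictFn2 (greedyBranch T b) i)) :
    greedyBranch T b i = b := by
  rw [greedyBranch_apply, if_pos]
  cases b
  exacts [h.1, h.2]

theorem greedyBranch_of_not_splitting {v : Bool}
    (hns : ¬ Splitting T (restrictFn2 (greedyBranch T b) i))
    (hv : (restrictFn2 (greedyBranch T b) i).snoc v ∈ T) :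
    greedyBranch T b i = v := by
  rw [greedyBranch_apply]
  unfold Splitting at hns
  split_ifs with hb <;> cases b <;> cases v <;> simp_all

theorem snoc_greedyBranch_mem {v : Bool} (hv : (restrictFn2 (greedyBranch T b) i).snoc v ∈ T) :
    (restrictFn2 (greedyBranch T b) i).snoc (greedyBranch T b i) ∈ T := by
  rw [greedyBranch_apply]
  split_ifs with hb
  · exact hb
  · cases b <;> cases v <;> simp_all

end Step

theorem greedyBranch_mem_branches (hT : IsSacks κ T) (b : Bool) :
    greedyBranch T b ∈ Branches2 κ T := by
  intro a
  induction a using Ordinal.limitRecOn with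
  | zero =>
    intro _
    obtain ⟨s, hs⟩ := hT.1
    rw [restrictFn2_congr (y := s.val) (by simp)]
    exact hT.2.2.1 s hs 0 zero_le
  | add_one a ih =>
    intro ha
    obtain ⟨v, hv⟩ := hT.exists_snoc_mem (ih ((lt_add_one a).trans ha))
    rw [restrictFn2_add_one]
    exact snoc_greedyBranch_mem hv
  | limit l hl ih =>
    intro hlκ
    exact hT.2.2.2.2.1 _ l hlκ hl fun a ha => ih a ha (ha.trans hlκ)

theorem greedyBranch_eqOn_of_not_splitting (hT : IsSacks κ T) {b : Bool} {t : PreSeq2}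
    (ht : t ∈ T)
    (h : ∀ i < t.len, greedyBranch T b i = t.val i ∨
      ¬ Splitting T (restrictFn2 (greedyBranch T b) i)) :
    EqOn (greedyBranch T b) t.val (Iio t.len) := by
  intro i
  induction i using WellFoundedLT.induction with
  | _ i ih =>
    intro hi
    rcases h i hi with heq | hns
    · exact heq
    · have hmem := hT.2.2.1 t ht (i + 1) (Order.add_one_le_of_lt hi)
      rw [restrictFn2_add_one, ← restrictFn2_congr fun j hj => ih j hj (hj.trans hi)] at hmem
      exact greedyBranch_of_not_splitting hns hmem

theorem greedyBranch_exists_splitting_ge (hT : IsSacks κ T) (b : Bool) {a : Ordinal}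
    (ha : a < κ.ord) :
    ∃ e, a ≤ e ∧ e < κ.ord ∧ Splitting T (restrictFn2 (greedyBranch T b) e) := by
  obtain ⟨t, ht, ⟨hat, hagree⟩, hsplit⟩ :=
    hT.2.2.2.2.2.1 _ (greedyBranch_mem_branches hT b a ha)
  have htκ : t.len < κ.ord := (hT.2.1 t ht).1
  by_contra! hnone
  have heqOn : EqOn (greedyBranch T b) t.val (Iio t.len) := by
    refine greedyBranch_eqOn_of_not_splitting hT ht fun i hi => ?_
    rcases lt_or_ge i a with hia | hai
    · exact .inl (by simpa [hia] using hagree i hia)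
    · exact .inr (hnone i hai (hi.trans htκ))
  rw [← (hT.2.1 t ht).2.restrictFn2_len, ← restrictFn2_congr heqOn] at hsplit
  exact hnone _ hat htκ hsplit

theorem greedyBranch_splitting_isClubIn (hT : IsSacks κ T) (b : Bool) :
    IsClubIn {e | e < κ.ord ∧ Splitting T (restrictFn2 (greedyBranch T b) e)} κ.ord := by
  refine ⟨fun e he => he.1, fun l hlκ hl hcof => ⟨hlκ, ?_⟩, fun a ha => ?_⟩
  · refine hT.2.2.2.2.2.2 _ l hlκ hl fun a ha => ?_
    obtain ⟨e, ⟨-, he⟩, hae, hel⟩ := hcof a ha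
    exact ⟨e, hae, hel, he⟩
  · obtain ⟨e, hae, heκ, he⟩ := greedyBranch_exists_splitting_ge hT b ha
    exact ⟨e, ⟨heκ, he⟩, hae⟩

theorem IsSacks.exists_branch_eq_on_club (hT : IsSacks κ T) (b : Bool) :
    ∃ x ∈ Branches2 κ T, ∃ c, IsClubIn c κ.ord ∧ ∀ i ∈ c, x i = b :=
  ⟨_, greedyBranch_mem_branches hT b, _, greedyBranch_splitting_isClubIn hT b,
    fun _ hi => greedyBranch_of_splitting hi.2⟩

end Sacks

theorem IsClubIn.isClub {c : Set Ordinal} {o : Ordinal} (hc : IsClubIn c o) :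
    IsClub {x : Iio o | x.1 ∈ c} := by
  refine ⟨fun d hdc ⟨x₀, hx₀⟩ _ a had => ?_, fun x => ?_⟩
  · by_cases ha : a ∈ d
    · exact hdc ha
    have hbetween : ∀ y < a, ∃ e ∈ d, y < e ∧ e < a := fun y hy => had.exists_between' ha hy
    have hx₀a : x₀.1 < a.1 := (had.1 hx₀).lt_of_ne (by rintro rfl; exact ha hx₀)
    refine hc.2.1 a a.2 ?_ fun y hy => ?_
    · rw [Ordinal.isSuccLimit_iff, Order.isSuccPrelimit_iff_succ_lt]
      refine ⟨(zero_le.trans_lt hx₀a).ne', fun y hy => ?_⟩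
      obtain ⟨e, -, hye, hea⟩ := hbetween ⟨y, hy.trans a.2⟩ hy
      exact (Order.succ_le_of_lt (show y < e.1 from hye)).trans_lt hea
    · obtain ⟨e, he, hye, hea⟩ := hbetween ⟨y, hy.trans a.2⟩ hy
      exact ⟨e, hdc he, hye.le, hea⟩
  · obtain ⟨e, he, hxe⟩ := hc.2.2 x x.2
    exact ⟨⟨e, hc.1 he⟩, he, hxe⟩

theorem IsClubIn.inter_nonempty {c c' : Set Ordinal} {o : Ordinal} (hc : IsClubIn c o)
    (hc' : IsClubIn c' o) (hcof : o.cof ≠ ℵ₀) (ho : o ≠ 0) : (c ∩ c').Nonempty := by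
  have : Nonempty (Iio o) := ⟨⟨0, pos_iff_ne_zero.2 ho⟩⟩
  have hcof' : Order.cof (Iio o) ≠ ℵ₀ := by
    rwa [Ordinal.cof_Iio, ← Ordinal.lift_cof, Ne, Cardinal.lift_eq_aleph0]
  obtain ⟨x, hx, hx'⟩ := (hc.isClub.inter hcof' hc'.isClub).nonempty
  exact ⟨x, hx, hx'⟩

theorem sacks_no_decision_about_clubFilter_general (κ : Cardinal) (hreg : κ.IsRegular)
    (hunc : Cardinal.aleph0 < κ)
    (T : Set PreSeq2) (hT : IsSacks κ T) :
    (∃ x ∈ Branches2 κ T, ∃ c, IsClubIn c κ.ord ∧ ∀ i ∈ c, x i = true) ∧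
    (∃ x ∈ Branches2 κ T, ∃ c, IsClubIn c κ.ord ∧ ∀ i ∈ c, x i = false) ∧
    ¬ (Branches2 κ T ⊆ clubFilterSet κ ∨ Branches2 κ T ∩ clubFilterSet κ = ∅) := by
  obtain ⟨x₁, hx₁, c₁, hc₁, hx₁c₁⟩ := hT.exists_branch_eq_on_club true
  obtain ⟨x₀, hx₀, c₀, hc₀, hx₀c₀⟩ := hT.exists_branch_eq_on_club false
  have hcof : κ.ord.cof ≠ ℵ₀ := by rw [hreg.cof_ord]; exact hunc.ne'
  have hκ : κ.ord ≠ 0 := Cardinal.ord_eq_zero.not.2 hreg.pos.ne'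
  refine ⟨⟨x₁, hx₁, c₁, hc₁, hx₁c₁⟩, ⟨x₀, hx₀, c₀, hc₀, hx₀c₀⟩, ?_⟩
  rintro (hsub | hdisj)
  · obtain ⟨c, hc, hx₀c⟩ := hsub hx₀
    obtain ⟨i, hi₀, hi⟩ := hc₀.inter_nonempty hc hcof hκ
    simpa [hx₀c₀ i hi₀] using hx₀c i hi
  · exact (eq_empty_iff_forall_notMem.1 hdisj) x₁ ⟨hx₁, c₁, hc₁, hx₁c₁⟩

/-- Every κ-Sacks tree has a branch whose `1`-set contains a club and a branch whose
`0`-set contains a club; hence no κ-Sacks tree has its branch set contained in, or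
disjoint from, the club filter. -/
theorem sacks_no_decision_about_clubFilter (κ : Cardinal) (hreg : κ.IsRegular)
    (hunc : Cardinal.aleph0 < κ) (hlt : Cardinal.powerlt κ κ = κ)
    (T : Set PreSeq2) (hT : IsSacks κ T) :
    (∃ x ∈ Branches2 κ T, ∃ c, IsClubIn c κ.ord ∧ ∀ i ∈ c, x i = true) ∧
    (∃ x ∈ Branches2 κ T, ∃ c, IsClubIn c κ.ord ∧ ∀ i ∈ c, x i = false) ∧
    ¬ (Branches2 κ T ⊆ clubFilterSet κ ∨ Branches2 κ T ∩ clubFilterSet κ = ∅) :=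
  sacks_no_decision_about_clubFilter_general κ hreg hunc T hT
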